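/- Fix unitaries U_1, ..., U_L on (C²)^{⊗n}. Define, on the Hilbert space (C²)^{⊗n} ⊗ (C²)^{⊗L}, the Hamiltonian H_final = (1/2)Σ_{ℓ=1}^L H_ℓ + H_input + H_clock, where H_clock = Σ_{ℓ=1}^{L-1} |01⟩⟨01|^c_{ℓ,ℓ+1}, H_input = Σ_{i=1}^n |1⟩⟨1|_i ⊗ |0⟩⟨0|^c_1, and H_ℓ = I⊗|100⟩⟨100|^c − U_ℓ⊗|110⟩⟨100|^c − U_ℓ†⊗|100⟩⟨110|^c + I⊗|110⟩⟨110|^c (with boundary modifications for ℓ = 1, L). Then the history state |η⟩ = (1/√(L+1)) Σ_{ℓ=0}^L (U_ℓ···U_1|0^n⟩) ⊗ |1^ℓ 0^{L−ℓ}⟩ satisfies H_final |η⟩ = 0, and since H_final is positive semidefinite, |η⟩ is a ground state of H_final with eigenvalue 0. -/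

import Mathlib

open scoped ComplexOrder

/-! Kitaev's final Hamiltonian for the adiabatic simulation of a quantum circuit, and
the fact that the history state is a ground state with eigenvalue `0`.

The Hilbert space is that of `n` computational qubits together with `L` clock qubits;
a computational basis element is a pair `(x, c)` with `x : Fin n → Bool` and
`c : Fin L → Bool`.  Clock qubits are numbered `1, …, L` as in the paper; `vclk c j`
gives the value of the `0`-indexed clock qubit `j ∈ {0, …, L-1}`, extended virtually by
`1`s to the left (`j < 0`) and `0`s to the right (`j ≥ L`), which uniformly encodes the
boundary modifications of the terms `H_1` and `H_L`. -/

/-- Value of clock qubit `j` (0-indexed, as an integer), with virtual `1`s to the left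
and `0`s to the right. -/
def vclk {L : ℕ} (c : Fin L → Bool) (j : ℤ) : Bool :=
  if j < 0 then true else if h : j.toNat < L then c ⟨j.toNat, h⟩ else false

/-- `c` and `c'` agree on all clock qubits whose (0-indexed, integer) position is
outside `T`. -/
def agreeOff {L : ℕ} (c c' : Fin L → Bool) (T : Finset ℤ) : Prop :=
  ∀ j : Fin L, ((j : ℕ) : ℤ) ∉ T → c j = c' j

instance {L : ℕ} (c c' : Fin L → Bool) (T : Finset ℤ) : Decidable (agreeOff c c' T) := by
  unfold agreeOff; infer_instance

/-- The unary clock state `|1^ℓ 0^(L-ℓ)⟩`. -/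
def clk (L : ℕ) (ℓ : ℕ) : Fin L → Bool := fun j => decide ((j : ℕ) < ℓ)

/-- The propagation term
`H_ℓ = I⊗|100⟩⟨100| − U_ℓ⊗|110⟩⟨100| − U_ℓ†⊗|100⟩⟨110| + I⊗|110⟩⟨110|`, acting on
clock qubits `ℓ-1, ℓ, ℓ+1` (1-indexed; `0`-indexed positions `ℓ-2, ℓ-1, ℓ`, with the
virtual boundary convention giving the modified terms for `ℓ = 1, L`). -/
noncomputable def Hprop (n L : ℕ) (U : ℕ → Matrix (Fin n → Bool) (Fin n → Bool) ℂ) (ℓ : ℕ) :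
    Matrix ((Fin n → Bool) × (Fin L → Bool)) ((Fin n → Bool) × (Fin L → Bool)) ℂ :=
  Matrix.of fun p q =>
    (if p.1 = q.1 ∧ p.2 = q.2 ∧ vclk p.2 ((ℓ : ℤ) - 2) = true ∧
        vclk p.2 ((ℓ : ℤ) - 1) = false ∧ vclk p.2 (ℓ : ℤ) = false then 1 else 0)
    - (if vclk p.2 ((ℓ : ℤ) - 2) = true ∧ vclk p.2 ((ℓ : ℤ) - 1) = true ∧
          vclk p.2 (ℓ : ℤ) = false ∧
          vclk q.2 ((ℓ : ℤ) - 2) = true ∧ vclk q.2 ((ℓ : ℤ) - 1) = false ∧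
          vclk q.2 (ℓ : ℤ) = false ∧
          agreeOff p.2 q.2 {(ℓ : ℤ) - 2, (ℓ : ℤ) - 1, (ℓ : ℤ)}
        then U ℓ p.1 q.1 else 0)
    - (if vclk p.2 ((ℓ : ℤ) - 2) = true ∧ vclk p.2 ((ℓ : ℤ) - 1) = false ∧
          vclk p.2 (ℓ : ℤ) = false ∧
          vclk q.2 ((ℓ : ℤ) - 2) = true ∧ vclk q.2 ((ℓ : ℤ) - 1) = true ∧
          vclk q.2 (ℓ : ℤ) = false ∧
          agreeOff p.2 q.2 {(ℓ : ℤ) - 2, (ℓ : ℤ) - 1, (ℓ : ℤ)}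
        then star (U ℓ q.1 p.1) else 0)
    + (if p.1 = q.1 ∧ p.2 = q.2 ∧ vclk p.2 ((ℓ : ℤ) - 2) = true ∧
        vclk p.2 ((ℓ : ℤ) - 1) = true ∧ vclk p.2 (ℓ : ℤ) = false then 1 else 0)

/-- `H_clock = ∑_{ℓ=1}^{L-1} |01⟩⟨01|_{ℓ,ℓ+1}`: energy penalty for illegal clock
states containing the substring `01`. -/
noncomputable def Hclock (n L : ℕ) :
    Matrix ((Fin n → Bool) × (Fin L → Bool)) ((Fin n → Bool) × (Fin L → Bool)) ℂ :=
  Matrix.of fun p q =>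
    ∑ j ∈ Finset.range (L - 1),
      if p = q ∧ vclk p.2 (j : ℤ) = false ∧ vclk p.2 ((j : ℤ) + 1) = true then 1 else 0

/-- `H_input = ∑_{i=1}^{n} |1⟩⟨1|_i ⊗ |0⟩⟨0|^c_1`: penalty if the clock is at time `0`
but some computational qubit is `1`. -/
noncomputable def Hinput (n L : ℕ) :
    Matrix ((Fin n → Bool) × (Fin L → Bool)) ((Fin n → Bool) × (Fin L → Bool)) ℂ :=
  Matrix.of fun p q =>
    ∑ i : Fin n, if p = q ∧ p.1 i = true ∧ vclk p.2 (0 : ℤ) = false then 1 else 0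

/-- `H_final = (1/2)∑_{ℓ=1}^{L} H_ℓ + H_input + H_clock`. -/
noncomputable def Hfinal (n L : ℕ) (U : ℕ → Matrix (Fin n → Bool) (Fin n → Bool) ℂ) :
    Matrix ((Fin n → Bool) × (Fin L → Bool)) ((Fin n → Bool) × (Fin L → Bool)) ℂ :=
  (1 / 2 : ℂ) • (∑ ℓ ∈ Finset.Icc 1 L, Hprop n L U ℓ) + Hinput n L + Hclock n L

/-- `α ℓ = U_ℓ ⋯ U_1 |0^n⟩`, the state of the circuit after `ℓ` gates. -/
noncomputable def alpha (n : ℕ) (U : ℕ → Matrix (Fin n → Bool) (Fin n → Bool) ℂ) :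
    ℕ → (Fin n → Bool) → ℂ
  | 0 => fun x => if x = fun _ => false then 1 else 0
  | ℓ + 1 => (U (ℓ + 1)).mulVec (alpha n U ℓ)

/-- The history state `|η⟩ = (1/√(L+1)) ∑_{ℓ=0}^{L} |α(ℓ)⟩ ⊗ |1^ℓ 0^(L-ℓ)⟩`. -/
noncomputable def historyState (n L : ℕ)
    (U : ℕ → Matrix (Fin n → Bool) (Fin n → Bool) ℂ) :
    (Fin n → Bool) × (Fin L → Bool) → ℂ :=
  fun p => ((1 / Real.sqrt (L + 1) : ℝ) : ℂ) *
    ∑ ℓ ∈ Finset.range (L + 1), if p.2 = clk L ℓ then alpha n U ℓ p.1 else 0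

/-! Each propagation term factors as `H_ℓ = A_ℓ A_ℓ†` with
`A_ℓ = I ⊗ |100⟩⟨100| − U_ℓ ⊗ |110⟩⟨100|`: the second summand is a partial isometry from the
`100`-subspace onto the `110`-subspace, so `H_ℓ` is positive semidefinite and is killed by
every vector killed by `A_ℓ† = I ⊗ |100⟩⟨100| − U_ℓ† ⊗ |100⟩⟨110|`. On the history state both
parts of `A_ℓ†` only see the times `ℓ - 1` and `ℓ` and produce the same vector
`|α(ℓ-1)⟩|1^(ℓ-1) 0^(L-ℓ+1)⟩`, because `U_ℓ† α(ℓ) = α(ℓ-1)`. The terms `H_input` and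
`H_clock` are diagonal with nonnegative entries that vanish on the support of the history
state: legal unary clocks only, and the input `0ⁿ` at time `0`. -/

open Matrix
open scoped Kronecker

theorem IsStarProjection.sub_sub_star_add_mul_star {R : Type*} [Ring R] [StarRing R]
    {P W : R} (hP : IsStarProjection P) (hWP : W * P = W) :
    P - W - star W + W * star W = (P - W) * star (P - W) := by
  have hPW : P * star W = star W := by
    rw [← hP.isSelfAdjoint.star_eq, ← star_mul, hWP]
  rw [star_sub, hP.isSelfAdjoint.star_eq, sub_mul, mul_sub, mul_sub, hP.isIdempotentElem.eq,
    hPW, hWP]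
  abel

theorem isStarProjection_diagonal_ite {R m : Type*} [Semiring R] [StarRing R] [Fintype m]
    [DecidableEq m] (P : m → Prop) [DecidablePred P] :
    IsStarProjection (diagonal fun c => if P c then (1 : R) else 0) := by
  refine ⟨?_, ?_⟩
  · rw [IsIdempotentElem, diagonal_mul_diagonal]
    congr 1; funext c; split_ifs <;> simp_all
  · rw [IsSelfAdjoint, star_eq_conjTranspose, diagonal_conjTranspose]
    congr 1; funext c; split_ifs <;> simp_all

theorem of_sum_ite_eq_and_eq_diagonal {R ι m : Type*} [AddCommMonoidWithOne R] [DecidableEq m]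
    (s : Finset ι) (P : ι → m → Prop) [∀ j p, Decidable (P j p)] :
    (of fun p q => ∑ j ∈ s, if p = q ∧ P j p then (1 : R) else 0) =
      diagonal fun p => ∑ j ∈ s, if P j p then 1 else 0 := by
  ext p q
  by_cases hpq : p = q
  · subst hpq; simp
  · simp [hpq]

theorem IsStarProjection.kronecker {R m n : Type*} [CommRing R] [StarRing R] [Fintype m]
    [Fintype n] {A : Matrix m m R} {B : Matrix n n R} (hA : IsStarProjection A)
    (hB : IsStarProjection B) : IsStarProjection (A ⊗ₖ B) where
  isIdempotentElem := by
    rw [IsIdempotentElem, ← mul_kronecker_mul, hA.isIdempotentElem.eq, hB.isIdempotentElem.eq]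
  isSelfAdjoint := by
    rw [IsSelfAdjoint, star_eq_conjTranspose, conjTranspose_kronecker, ← star_eq_conjTranspose,
      ← star_eq_conjTranspose, hA.isSelfAdjoint.star_eq, hB.isSelfAdjoint.star_eq]

def tensorVec {R m n : Type*} [Mul R] (v : m → R) (w : n → R) : m × n → R :=
  fun p => v p.1 * w p.2

theorem kronecker_mulVec_tensorVec {R m n m' n' : Type*} [CommSemiring R] [Fintype m]
    [Fintype n] (A : Matrix m' m R) (B : Matrix n' n R) (v : m → R) (w : n → R) :
    (A ⊗ₖ B) *ᵥ tensorVec v w = tensorVec (A *ᵥ v) (B *ᵥ w) := by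
  ext ⟨i, j⟩
  simp only [mulVec, dotProduct, tensorVec, kronecker_apply, Fintype.sum_prod_type,
    Finset.sum_mul_sum]
  exact Finset.sum_congr rfl fun _ _ => Finset.sum_congr rfl fun _ _ => mul_mul_mul_comm ..

theorem tensorVec_zero_right {R m n : Type*} [MulZeroClass R] (v : m → R) :
    tensorVec v (0 : n → R) = 0 := by
  funext p
  simp [tensorVec]

section Clock
variable {L : ℕ}

theorem vclk_coe (c : Fin L → Bool) (j : Fin L) : vclk c ((j : ℕ) : ℤ) = c j := by
  simp [vclk]

theorem vclk_clk {m : ℕ} (hm : m ≤ L) (j : ℤ) : vclk (clk L m) j = decide (j < m) := by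
  unfold vclk clk
  split_ifs <;> simp <;> omega

theorem vclk_update (c : Fin L → Bool) (i : Fin L) (b : Bool) (j : ℤ) :
    vclk (Function.update c i b) j = if j = ((i : ℕ) : ℤ) then b else vclk c j := by
  unfold vclk
  split_ifs <;> simp_all [Function.update_apply, Fin.ext_iff] <;> omega

theorem clk_inj {m m' : ℕ} (hm : m ≤ L) (hm' : m' ≤ L) (h : clk L m = clk L m') : m = m' := by
  have h₁ := congrArg (vclk · m) h
  have h₂ := congrArg (vclk · m') h
  simp only [vclk_clk hm, vclk_clk hm'] at h₁ h₂
  simp at h₁ h₂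
  omega

def clockWindow (ℓ : ℕ) : Finset ℤ := {(ℓ : ℤ) - 2, (ℓ : ℤ) - 1, (ℓ : ℤ)}

def Pat100 (ℓ : ℕ) (c : Fin L → Bool) : Prop :=
  vclk c ((ℓ : ℤ) - 2) = true ∧ vclk c ((ℓ : ℤ) - 1) = false ∧ vclk c (ℓ : ℤ) = false

def Pat110 (ℓ : ℕ) (c : Fin L → Bool) : Prop :=
  vclk c ((ℓ : ℤ) - 2) = true ∧ vclk c ((ℓ : ℤ) - 1) = true ∧ vclk c (ℓ : ℤ) = false

instance (ℓ : ℕ) : DecidablePred (Pat100 (L := L) ℓ) := fun _ => by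
  unfold Pat100; infer_instance

instance (ℓ : ℕ) : DecidablePred (Pat110 (L := L) ℓ) := fun _ => by
  unfold Pat110; infer_instance

theorem pat100_clk_iff (i : Fin L) {m : ℕ} (hm : m ≤ L) :
    Pat100 ((i : ℕ) + 1) (clk L m) ↔ m = i := by
  simp only [Pat100, vclk_clk hm]
  simp
  omega

theorem pat110_clk_iff (i : Fin L) {m : ℕ} (hm : m ≤ L) :
    Pat110 ((i : ℕ) + 1) (clk L m) ↔ m = i + 1 := by
  simp only [Pat110, vclk_clk hm]
  simp
  omega

theorem update_clk_succ (i : Fin L) : Function.update (clk L (i + 1)) i false = clk L i := by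
  funext j
  rw [Function.update_apply]
  split_ifs with h
  · simp [clk, h]
  · simp only [clk, decide_eq_decide]
    have : (j : ℕ) ≠ i := fun h' => h (Fin.ext h')
    omega

theorem pat100_update_of_pat110 {i : Fin L} {c : Fin L → Bool} (hc : Pat110 ((i : ℕ) + 1) c) :
    Pat100 ((i : ℕ) + 1) (Function.update c i false) := by
  obtain ⟨h₁, -, h₃⟩ := hc
  push_cast at h₁ h₃ ⊢
  refine ⟨?_, ?_, ?_⟩ <;> rw [vclk_update]
  · rwa [if_neg (by omega)]
  · rw [if_pos (by omega)]
  · rwa [if_neg (by omega)]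

theorem agreeOff_comm {c c' : Fin L → Bool} {T : Finset ℤ} :
    agreeOff c c' T ↔ agreeOff c' c T :=
  ⟨fun h j hj => (h j hj).symm, fun h j hj => (h j hj).symm⟩

theorem eq_of_pat100_of_agreeOff {ℓ : ℕ} {c c' : Fin L → Bool} (hc : Pat100 ℓ c)
    (hc' : Pat100 ℓ c') (hag : agreeOff c c' (clockWindow ℓ)) : c = c' := by
  funext j
  by_cases hj : ((j : ℕ) : ℤ) ∈ clockWindow ℓ
  · obtain ⟨a₁, a₂, a₃⟩ := hc
    obtain ⟨b₁, b₂, b₃⟩ := hc'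
    rw [← vclk_coe c, ← vclk_coe c']
    simp only [clockWindow, Finset.mem_insert, Finset.mem_singleton] at hj
    rcases hj with h | h | h <;> simp only [*]
  · exact hag j hj

theorem agreeOff_update_self (c : Fin L → Bool) {i : Fin L} {T : Finset ℤ}
    (hi : ((i : ℕ) : ℤ) ∈ T) (b : Bool) : agreeOff c (Function.update c i b) T := by
  intro j hj
  rw [Function.update_of_ne]
  rintro rfl
  exact hj hi

theorem pat110_and_pat100_and_agreeOff_iff {i : Fin L} {c c' : Fin L → Bool} :
    Pat110 ((i : ℕ) + 1) c ∧ Pat100 ((i : ℕ) + 1) c' ∧ agreeOff c c' (clockWindow (i + 1)) ↔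
      Pat110 ((i : ℕ) + 1) c ∧ c' = Function.update c i false := by
  have hi : ((i : ℕ) : ℤ) ∈ clockWindow (i + 1) := by simp [clockWindow]
  constructor
  · rintro ⟨hc, hc', hag⟩
    refine ⟨hc, eq_of_pat100_of_agreeOff hc' (pat100_update_of_pat110 hc) fun j hj => ?_⟩
    exact (hag j hj).symm.trans (agreeOff_update_self c hi false j hj)
  · rintro ⟨hc, rfl⟩
    exact ⟨hc, pat100_update_of_pat110 hc, agreeOff_update_self c hi false⟩

theorem update_eq_update_iff_of_pat110 {i : Fin L} {c c' : Fin L → Bool}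
    (hc : Pat110 ((i : ℕ) + 1) c) (hc' : Pat110 ((i : ℕ) + 1) c') :
    Function.update c i false = Function.update c' i false ↔ c = c' := by
  refine ⟨fun h => funext fun j => ?_, fun h => h ▸ rfl⟩
  by_cases hj : j = i
  · subst hj
    have h₁ := hc.2.1
    have h₂ := hc'.2.1
    push_cast at h₁ h₂
    rw [add_sub_cancel_right, vclk_coe] at h₁ h₂
    rw [h₁, h₂]
  · simpa [Function.update_of_ne hj] using congrFun h j

end Clock

section Propagation
variable {n L : ℕ}

def proj100 (ℓ : ℕ) : Matrix (Fin L → Bool) (Fin L → Bool) ℂ :=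
  diagonal fun c => if Pat100 ℓ c then 1 else 0

def proj110 (ℓ : ℕ) : Matrix (Fin L → Bool) (Fin L → Bool) ℂ :=
  diagonal fun c => if Pat110 ℓ c then 1 else 0

/-- `|100⟩⟨110|` on the window of `H_(i+1)`: it moves the clock back from time `i + 1` to
time `i`. -/
def clockLower (i : Fin L) : Matrix (Fin L → Bool) (Fin L → Bool) ℂ :=
  of fun c c' => if Pat110 ((i : ℕ) + 1) c' ∧ c = Function.update c' i false then 1 else 0

theorem proj100_mul_clockLower (i : Fin L) :
    proj100 ((i : ℕ) + 1) * clockLower i = clockLower i := by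
  ext c c'
  simp only [proj100, clockLower, diagonal_mul, of_apply]
  by_cases h : Pat110 ((i : ℕ) + 1) c' ∧ c = Function.update c' i false
  · rw [if_pos h, if_pos (h.2 ▸ pat100_update_of_pat110 h.1), one_mul]
  · simp [h]

theorem conjTranspose_clockLower_mul_self (i : Fin L) :
    (clockLower i)ᴴ * clockLower i = proj110 ((i : ℕ) + 1) := by
  ext c c'
  simp only [clockLower, proj110, mul_apply, conjTranspose_apply, of_apply, diagonal_apply]
  by_cases hc : Pat110 ((i : ℕ) + 1) c
  · by_cases hc' : Pat110 ((i : ℕ) + 1) c'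
    · simp [hc, hc', Finset.sum_ite_eq', update_eq_update_iff_of_pat110 hc' hc, eq_comm]
    · simp [hc, hc']
      exact fun h => hc' (h ▸ hc)
  · simp [hc]

theorem Hprop_apply (U : ℕ → Matrix (Fin n → Bool) (Fin n → Bool) ℂ) (ℓ : ℕ)
    (p q : (Fin n → Bool) × (Fin L → Bool)) :
    Hprop n L U ℓ p q =
      (if p.1 = q.1 ∧ p.2 = q.2 ∧ Pat100 ℓ p.2 then 1 else 0)
      - (if Pat110 ℓ p.2 ∧ Pat100 ℓ q.2 ∧ agreeOff p.2 q.2 (clockWindow ℓ)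
          then U ℓ p.1 q.1 else 0)
      - (if Pat100 ℓ p.2 ∧ Pat110 ℓ q.2 ∧ agreeOff p.2 q.2 (clockWindow ℓ)
          then star (U ℓ q.1 p.1) else 0)
      + (if p.1 = q.1 ∧ p.2 = q.2 ∧ Pat110 ℓ p.2 then 1 else 0) := by
  simp only [Hprop, of_apply, Pat100, Pat110, clockWindow, and_assoc]
  congr

def forwardStep (U : ℕ → Matrix (Fin n → Bool) (Fin n → Bool) ℂ) (i : Fin L) :
    Matrix ((Fin n → Bool) × (Fin L → Bool)) ((Fin n → Bool) × (Fin L → Bool)) ℂ :=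
  U (i + 1) ⊗ₖ (clockLower i)ᴴ

theorem Hprop_eq (U : ℕ → Matrix (Fin n → Bool) (Fin n → Bool) ℂ) (i : Fin L) :
    Hprop n L U (i + 1) = 1 ⊗ₖ proj100 ((i : ℕ) + 1) - forwardStep U i - star (forwardStep U i)
      + 1 ⊗ₖ proj110 ((i : ℕ) + 1) := by
  ext ⟨x, c⟩ ⟨y, c'⟩
  have h₁ := pat110_and_pat100_and_agreeOff_iff (i := i) (c := c) (c' := c')
  have h₂ := pat110_and_pat100_and_agreeOff_iff (i := i) (c := c') (c' := c)
  rw [agreeOff_comm, ← and_assoc, and_comm (a := Pat110 _ _), and_assoc] at h₂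
  rw [Hprop_apply]
  simp only [h₁, h₂, forwardStep, star_eq_conjTranspose, conjTranspose_kronecker,
    conjTranspose_conjTranspose, Matrix.sub_apply, Matrix.add_apply, kronecker_apply, one_apply,
    proj100, proj110, diagonal_apply, clockLower, conjTranspose_apply, of_apply]
  congr 1
  · congr 1
    · congr 1
      · simp only [ite_and, boole_mul]
      · rw [apply_ite star, star_one, star_zero, mul_boole]
    · rw [mul_boole]
  · simp only [ite_and, boole_mul]

theorem proj100_mulVec_single_clk (i : Fin L) {m : ℕ} (hm : m ≤ L) :
    proj100 ((i : ℕ) + 1) *ᵥ Pi.single (clk L m) 1 =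
      if m = i then Pi.single (clk L m) 1 else 0 := by
  rw [proj100, diagonal_mulVec_single]
  simp only [pat100_clk_iff i hm, mul_one]
  split_ifs <;> simp

theorem clockLower_mulVec_single_clk (i : Fin L) {m : ℕ} (hm : m ≤ L) :
    clockLower i *ᵥ Pi.single (clk L m) 1 =
      if m = (i : ℕ) + 1 then Pi.single (clk L i) 1 else 0 := by
  rw [mulVec_single_one]
  ext c
  simp only [clockLower, col_apply, of_apply, pat110_clk_iff i hm]
  by_cases hmi : m = (i : ℕ) + 1
  · subst hmi
    simp [update_clk_succ, Pi.single_apply]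
  · simp [hmi]

theorem isStarProjection_proj100 (ℓ : ℕ) : IsStarProjection (proj100 (L := L) ℓ) :=
  isStarProjection_diagonal_ite _

theorem forwardStep_mul_proj100 (U : ℕ → Matrix (Fin n → Bool) (Fin n → Bool) ℂ) (i : Fin L) :
    forwardStep U i * (1 ⊗ₖ proj100 ((i : ℕ) + 1)) = forwardStep U i := by
  have h := congrArg conjTranspose (proj100_mul_clockLower i)
  rw [conjTranspose_mul, ← star_eq_conjTranspose (proj100 _),
    (isStarProjection_proj100 _).isSelfAdjoint.star_eq] at h
  rw [forwardStep, ← mul_kronecker_mul, mul_one, h]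

theorem forwardStep_mul_star {U : ℕ → Matrix (Fin n → Bool) (Fin n → Bool) ℂ} {i : Fin L}
    (hU : U (i + 1) ∈ unitaryGroup (Fin n → Bool) ℂ) :
    forwardStep U i * star (forwardStep U i) = 1 ⊗ₖ proj110 ((i : ℕ) + 1) := by
  rw [star_eq_conjTranspose, forwardStep, conjTranspose_kronecker, conjTranspose_conjTranspose,
    ← mul_kronecker_mul, conjTranspose_clockLower_mul_self, ← star_eq_conjTranspose,
    mem_unitaryGroup_iff.mp hU]

def propagationFactor (U : ℕ → Matrix (Fin n → Bool) (Fin n → Bool) ℂ) (i : Fin L) :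
    Matrix ((Fin n → Bool) × (Fin L → Bool)) ((Fin n → Bool) × (Fin L → Bool)) ℂ :=
  1 ⊗ₖ proj100 ((i : ℕ) + 1) - forwardStep U i

theorem Hprop_eq_mul_star {U : ℕ → Matrix (Fin n → Bool) (Fin n → Bool) ℂ} {i : Fin L}
    (hU : U (i + 1) ∈ unitaryGroup (Fin n → Bool) ℂ) :
    Hprop n L U (i + 1) = propagationFactor U i * star (propagationFactor U i) := by
  rw [Hprop_eq, ← forwardStep_mul_star hU]
  exact IsStarProjection.sub_sub_star_add_mul_star
    ((IsStarProjection.one _).kronecker (isStarProjection_proj100 _)) (forwardStep_mul_proj100 U i)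

theorem Hprop_posSemidef {U : ℕ → Matrix (Fin n → Bool) (Fin n → Bool) ℂ} {i : Fin L}
    (hU : U (i + 1) ∈ unitaryGroup (Fin n → Bool) ℂ) : (Hprop n L U (i + 1)).PosSemidef := by
  rw [Hprop_eq_mul_star hU, star_eq_conjTranspose]
  exact posSemidef_self_mul_conjTranspose _

theorem historyState_eq_smul_sum (U : ℕ → Matrix (Fin n → Bool) (Fin n → Bool) ℂ) :
    historyState n L U = ((1 / Real.sqrt (L + 1) : ℝ) : ℂ) •
      ∑ m ∈ Finset.range (L + 1), tensorVec (alpha n U m) (Pi.single (clk L m) 1) := by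
  funext p
  simp [historyState, tensorVec, Finset.sum_apply, Pi.single_apply]

theorem conjTranspose_mulVec_alpha_succ {U : ℕ → Matrix (Fin n → Bool) (Fin n → Bool) ℂ} {m : ℕ}
    (hU : U (m + 1) ∈ unitaryGroup (Fin n → Bool) ℂ) :
    (U (m + 1))ᴴ *ᵥ alpha n U (m + 1) = alpha n U m := by
  rw [alpha, mulVec_mulVec, ← star_eq_conjTranspose, mem_unitaryGroup_iff'.mp hU, one_mulVec]

theorem star_propagationFactor_mulVec_sum {U : ℕ → Matrix (Fin n → Bool) (Fin n → Bool) ℂ}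
    {i : Fin L} (hU : U (i + 1) ∈ unitaryGroup (Fin n → Bool) ℂ) :
    star (propagationFactor U i) *ᵥ
      ∑ m ∈ Finset.range (L + 1), tensorVec (alpha n U m) (Pi.single (clk L m) 1) = 0 := by
  rw [propagationFactor, star_sub, star_eq_conjTranspose, star_eq_conjTranspose, forwardStep,
    conjTranspose_kronecker, conjTranspose_kronecker, conjTranspose_conjTranspose,
    conjTranspose_one, ← star_eq_conjTranspose (proj100 _),
    (isStarProjection_proj100 _).isSelfAdjoint.star_eq, sub_mulVec, mulVec_sum, mulVec_sum]
  have hP : ∀ m ∈ Finset.range (L + 1),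
      (1 ⊗ₖ proj100 ((i : ℕ) + 1)) *ᵥ tensorVec (alpha n U m) (Pi.single (clk L m) 1) =
        if m = i then tensorVec (alpha n U i) (Pi.single (clk L i) 1) else 0 := by
    intro m hm
    rw [kronecker_mulVec_tensorVec, one_mulVec,
      proj100_mulVec_single_clk i (Nat.lt_succ_iff.mp (Finset.mem_range.mp hm))]
    split_ifs with h
    · rw [h]
    · exact tensorVec_zero_right _
  have hW : ∀ m ∈ Finset.range (L + 1),
      ((U (i + 1))ᴴ ⊗ₖ clockLower i) *ᵥ tensorVec (alpha n U m) (Pi.single (clk L m) 1) =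
        if m = (i : ℕ) + 1 then tensorVec (alpha n U i) (Pi.single (clk L i) 1) else 0 := by
    intro m hm
    rw [kronecker_mulVec_tensorVec,
      clockLower_mulVec_single_clk i (Nat.lt_succ_iff.mp (Finset.mem_range.mp hm))]
    split_ifs with h
    · rw [h, conjTranspose_mulVec_alpha_succ hU]
    · exact tensorVec_zero_right _
  rw [Finset.sum_congr rfl hP, Finset.sum_congr rfl hW, Finset.sum_ite_eq', Finset.sum_ite_eq',
    if_pos (by simp), if_pos (by simp), sub_self]

theorem Hprop_mulVec_historyState {U : ℕ → Matrix (Fin n → Bool) (Fin n → Bool) ℂ}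
    {i : Fin L} (hU : U (i + 1) ∈ unitaryGroup (Fin n → Bool) ℂ) :
    Hprop n L U (i + 1) *ᵥ historyState n L U = 0 := by
  rw [Hprop_eq_mul_star hU, ← mulVec_mulVec, historyState_eq_smul_sum, mulVec_smul,
    star_propagationFactor_mulVec_sum hU, smul_zero, mulVec_zero]

end Propagation

section Penalties
variable {n L : ℕ}

theorem historyState_apply_clk (U : ℕ → Matrix (Fin n → Bool) (Fin n → Bool) ℂ) {m : ℕ}
    (hm : m ≤ L) (x : Fin n → Bool) :
    historyState n L U (x, clk L m) = ((1 / Real.sqrt (L + 1) : ℝ) : ℂ) * alpha n U m x := by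
  rw [historyState, Finset.sum_eq_single m]
  · simp
  · intro k hk hkm
    rw [if_neg fun h => hkm (clk_inj (Nat.lt_succ_iff.mp (Finset.mem_range.mp hk)) hm h.symm)]
  · intro h
    exact absurd (Finset.mem_range.mpr (Nat.lt_succ_of_le hm)) h

theorem historyState_apply_of_forall_ne (U : ℕ → Matrix (Fin n → Bool) (Fin n → Bool) ℂ)
    {x : Fin n → Bool} {c : Fin L → Bool} (hc : ∀ m ≤ L, c ≠ clk L m) :
    historyState n L U (x, c) = 0 := by
  rw [historyState, Finset.sum_eq_zero fun m hm => if_neg (hc m ?_), mul_zero]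
  exact Nat.lt_succ_iff.mp (Finset.mem_range.mp hm)

theorem historyState_ne_zero (U : ℕ → Matrix (Fin n → Bool) (Fin n → Bool) ℂ) :
    historyState n L U ≠ 0 := by
  intro h
  have h₀ := congrFun h (fun _ => false, clk L 0)
  rw [historyState_apply_clk U (Nat.zero_le L)] at h₀
  simp [alpha] at h₀
  exact (Real.sqrt_pos.mpr (by positivity)).ne' h₀

theorem diagonal_mulVec_historyState (U : ℕ → Matrix (Fin n → Bool) (Fin n → Bool) ℂ)
    (d : (Fin n → Bool) × (Fin L → Bool) → ℂ)
    (hd : ∀ m ≤ L, ∀ x, d (x, clk L m) * alpha n U m x = 0) :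
    diagonal d *ᵥ historyState n L U = 0 := by
  funext ⟨x, c⟩
  rw [mulVec_diagonal, Pi.zero_apply]
  by_cases hc : ∃ m ≤ L, c = clk L m
  · obtain ⟨m, hm, rfl⟩ := hc
    rw [historyState_apply_clk U hm, mul_left_comm, hd m hm x, mul_zero]
  · push Not at hc
    rw [historyState_apply_of_forall_ne U hc, mul_zero]

theorem Hinput_eq_diagonal : Hinput n L = diagonal fun p =>
    ∑ i : Fin n, if p.1 i = true ∧ vclk p.2 0 = false then 1 else 0 :=
  of_sum_ite_eq_and_eq_diagonal _ _

theorem Hclock_eq_diagonal : Hclock n L = diagonal fun p =>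
    ∑ j ∈ Finset.range (L - 1),
      if vclk p.2 (j : ℤ) = false ∧ vclk p.2 ((j : ℤ) + 1) = true then 1 else 0 :=
  of_sum_ite_eq_and_eq_diagonal _ _

theorem Hinput_posSemidef : (Hinput n L).PosSemidef := by
  rw [Hinput_eq_diagonal]
  exact posSemidef_diagonal_iff.mpr fun p => Finset.sum_nonneg fun _ _ => by
    split_ifs <;> norm_num

theorem Hclock_posSemidef : (Hclock n L).PosSemidef := by
  rw [Hclock_eq_diagonal]
  exact posSemidef_diagonal_iff.mpr fun p => Finset.sum_nonneg fun _ _ => by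
    split_ifs <;> norm_num

theorem Hinput_mulVec_historyState (U : ℕ → Matrix (Fin n → Bool) (Fin n → Bool) ℂ) :
    Hinput n L *ᵥ historyState n L U = 0 := by
  rw [Hinput_eq_diagonal]
  refine diagonal_mulVec_historyState U _ fun m hm x => ?_
  rcases Nat.eq_zero_or_pos m with rfl | hm₀
  · by_cases hx : x = fun _ => false
    · simp [hx]
    · simp [alpha, hx]
  · simp [vclk_clk hm, hm₀]

theorem Hclock_mulVec_historyState (U : ℕ → Matrix (Fin n → Bool) (Fin n → Bool) ℂ) :
    Hclock n L *ᵥ historyState n L U = 0 := by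
  rw [Hclock_eq_diagonal]
  refine diagonal_mulVec_historyState U _ fun m hm x => ?_
  rw [Finset.sum_eq_zero fun j _ => if_neg ?_, zero_mul]
  simp only [vclk_clk hm, decide_eq_false_iff_not, decide_eq_true_eq]
  omega

end Penalties

theorem history_state_is_ground_state_of_Hfinal_general (n L : ℕ)
    (U : ℕ → Matrix (Fin n → Bool) (Fin n → Bool) ℂ)
    (hU : ∀ ℓ, U ℓ ∈ Matrix.unitaryGroup (Fin n → Bool) ℂ) :
    (Hfinal n L U).PosSemidef ∧
    (Hfinal n L U).mulVec (historyState n L U) = 0 ∧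
    historyState n L U ≠ 0 := by
  have hIcc : ∀ ℓ ∈ Finset.Icc 1 L, ∃ i : Fin L, ℓ = (i : ℕ) + 1 := fun ℓ hℓ => by
    obtain ⟨h₁, h₂⟩ := Finset.mem_Icc.mp hℓ
    exact ⟨⟨ℓ - 1, by omega⟩, by simp; omega⟩
  refine ⟨?_, ?_, historyState_ne_zero U⟩
  · refine ((PosSemidef.smul (posSemidef_sum _ fun ℓ hℓ => ?_) (one_div_nonneg.mpr zero_le_two)).add
      Hinput_posSemidef).add Hclock_posSemidef
    obtain ⟨i, rfl⟩ := hIcc ℓ hℓ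
    exact Hprop_posSemidef (hU _)
  · rw [Hfinal, add_mulVec, add_mulVec, smul_mulVec, sum_mulVec,
      Finset.sum_eq_zero fun ℓ hℓ => ?_, smul_zero, Hinput_mulVec_historyState,
      Hclock_mulVec_historyState, add_zero, add_zero]
    obtain ⟨i, rfl⟩ := hIcc ℓ hℓ
    exact Hprop_mulVec_historyState (hU _)

/-- The history state is a ground state of `H_final` with eigenvalue `0`:
`H_final |η⟩ = 0` and `H_final` is positive semidefinite. -/
theorem history_state_is_ground_state_of_Hfinal (n L : ℕ) (hL : 1 ≤ L)
    (U : ℕ → Matrix (Fin n → Bool) (Fin n → Bool) ℂ)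
    (hU : ∀ ℓ, U ℓ ∈ Matrix.unitaryGroup (Fin n → Bool) ℂ) :
    (Hfinal n L U).PosSemidef ∧
    (Hfinal n L U).mulVec (historyState n L U) = 0 ∧
    historyState n L U ≠ 0 :=
  history_state_is_ground_state_of_Hfinal_general n L U hU
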